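/- Let G = (V,E) be a finite simple graph on n vertices, let γ ∈ (0, 1/2], set k := ⌈1/γ⌉, and let M be a matching in G such that for every i ∈ {0, 1, …, k}, every collection of pairwise vertex-disjoint augmenting paths of length 2i+1 with respect to M in G has size at most γ²·n. Then μ(G) ≤ |M| + 3·γ·n. -/

import Mathlib

attribute [local instance] Classical.propDecidable

/-- A matching in a simple graph `G`, represented as a finite set of edges of `G`
no two of which share an endpoint. -/
def IsMatching {V : Type*} (G : SimpleGraph V) (M : Finset (Sym2 V)) : Prop :=
  (∀ e ∈ M, e ∈ G.edgeSet) ∧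
  ∀ e ∈ M, ∀ f ∈ M, e ≠ f → ∀ v : V, v ∈ e → v ∉ f

/-- The matching number `μ(G)`: the maximum size of a matching in `G`. -/
noncomputable def matchNum {V : Type*} (G : SimpleGraph V) : ℕ :=
  sSup {k | ∃ M : Finset (Sym2 V), IsMatching G M ∧ M.card = k}

/-- An augmenting path of length `2k+1` w.r.t. the matching `M`: a sequence of distinct
vertices `p 0, …, p (2k+1)` whose endpoints are unmatched, with
`(p (2i), p (2i+1)) ∈ E \ M` for `i ∈ [0,k]` and `(p (2i−1), p (2i)) ∈ M` for `i ∈ [1,k]`. -/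
def IsAugPath {V : Type*} (G : SimpleGraph V) (M : Finset (Sym2 V)) (k : ℕ) (p : ℕ → V) :
    Prop :=
  (∀ i j, i ≤ 2*k+1 → j ≤ 2*k+1 → p i = p j → i = j) ∧
  (∀ e ∈ M, p 0 ∉ e) ∧ (∀ e ∈ M, p (2*k+1) ∉ e) ∧
  (∀ i ≤ k, G.Adj (p (2*i)) (p (2*i+1)) ∧ s(p (2*i), p (2*i+1)) ∉ M) ∧
  (∀ i, 1 ≤ i → i ≤ k → s(p (2*i-1), p (2*i)) ∈ M)

/-!
Take a maximum matching `N` and encode `N` and `M` by the involutions `mate N`, `mate M` of `V`,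
which fix the uncovered vertices. Applying them alternately from a vertex covered by `N` but not
by `M` traces a component of `M ∆ N` until it gets stuck: after an odd number of steps the trace
is an augmenting path for `M`, after an even number it ends at a vertex covered by `M` but not by
`N`, and distinct starting points give distinct such ends. Counting covered vertices therefore
yields `|N| ≤ |M| + #P` for a family `P` of vertex-disjoint augmenting paths (one trace per path).
By hypothesis at most `(⌈1/γ⌉ + 1) γ² n` of them have length `≤ 2⌈1/γ⌉ + 1`, and each longer one
has more than `2/γ` vertices, so there are fewer than `γ n / 2` of those.
-/

open Function

theorem Finset.exists_half_of_involution {α : Type*} {s : Finset α} {f : α → α}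
    (hs : ∀ x ∈ s, f x ∈ s) (hf : ∀ x ∈ s, f (f x) = x) (hfix : ∀ x ∈ s, f x ≠ x) :
    ∃ t ⊆ s, s.card = 2 * t.card ∧ ∀ x ∈ t, f x ∉ t := by
  let _ := IsWellOrder.linearOrder (WellOrderingRel : α → α → Prop)
  refine ⟨s.filter (fun x => x < f x), Finset.filter_subset _ _, ?_, ?_⟩
  · have hswap : (s.filter (fun x => ¬ x < f x)).card = (s.filter (fun x => x < f x)).card := by
      apply Finset.card_nbij' f f <;> intro x hx <;>
        simp only [Finset.coe_filter, Set.mem_ofPred_eq] at hx ⊢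
      · exact ⟨hs x hx.1, by rw [hf x hx.1]; exact lt_of_le_of_ne (not_lt.mp hx.2) (hfix x hx.1)⟩
      · exact ⟨hs x hx.1, by rw [hf x hx.1]; exact hx.2.le.not_gt⟩
      · exact hf x hx.1
      · exact hf x hx.1
    rw [← Finset.card_filter_add_card_filter_not (fun x => x < f x), hswap, two_mul]
  · intro x hx hfx
    simp only [Finset.mem_filter] at hx hfx
    rw [hf x hx.1] at hfx
    exact hx.2.not_gt hfx.2

lemma Finset.card_le_sum_card_filter_eq_add {α : Type*} (P : Finset α) (f : α → ℕ) (k : ℕ) :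
    P.card ≤ ∑ i ∈ Finset.range (k + 1), (P.filter (f · = i)).card +
      (P.filter (k + 1 ≤ f ·)).card := by
  refine (Finset.card_le_card fun p hp => ?_).trans
    ((Finset.card_union_le _ _).trans (Nat.add_le_add_right Finset.card_biUnion_le _))
  by_cases hpk : k + 1 ≤ f p
  · exact Finset.mem_union_right _ (Finset.mem_filter.mpr ⟨hp, hpk⟩)
  · exact Finset.mem_union_left _ (Finset.mem_biUnion.mpr
      ⟨f p, Finset.mem_range.mpr (by omega), Finset.mem_filter.mpr ⟨hp, rfl⟩⟩)

namespace AltSeq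

variable {V : Type*} {σ τ : V → V} {u u' : V} {a b : ℕ}

def IsStart (σ τ : V → V) (u : V) : Prop := σ u ≠ u ∧ τ u = u

def altStep (σ τ : V → V) (j : ℕ) : V → V := if Even j then σ else τ

def altSeq (σ τ : V → V) (u : V) : ℕ → V
  | 0 => u
  | j + 1 => altStep σ τ j (altSeq σ τ u j)

-- `0` if the sequence never gets stuck
noncomputable def altStop (σ τ : V → V) (u : V) : ℕ :=
  sInf {j | altSeq σ τ u (j + 1) = altSeq σ τ u j}

lemma altSeq_zero : altSeq σ τ u 0 = u := rfl

lemma altSeq_succ (j : ℕ) : altSeq σ τ u (j + 1) = altStep σ τ j (altSeq σ τ u j) := rfl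

lemma altStep_of_even {j : ℕ} (hj : Even j) : altStep σ τ j = σ := if_pos hj

lemma altStep_of_odd {j : ℕ} (hj : Odd j) : altStep σ τ j = τ :=
  if_neg (Nat.not_even_iff_odd.mpr hj)

lemma altStep_congr {j j' : ℕ} (h : j % 2 = j' % 2) : altStep σ τ j = altStep σ τ j' := by
  simp only [altStep, Nat.even_iff, h]

lemma altSeq_succ_ne_of_lt_altStop {j : ℕ} (hj : j < altStop σ τ u) :
    altSeq σ τ u (j + 1) ≠ altSeq σ τ u j :=
  Nat.notMem_of_lt_sInf hj

lemma altStop_eq {S : ℕ} (hmove : ∀ j < S, altSeq σ τ u (j + 1) ≠ altSeq σ τ u j)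
    (hS : altSeq σ τ u (S + 1) = altSeq σ τ u S) : altStop σ τ u = S := by
  refine le_antisymm (Nat.sInf_le hS) (not_lt.mp fun hlt => hmove _ hlt ?_)
  exact Nat.sInf_mem (s := {j | altSeq σ τ u (j + 1) = altSeq σ τ u j}) ⟨S, hS⟩

section Involutive

variable (hσ : Involutive σ) (hτ : Involutive τ)
include hσ hτ

lemma altStep_involutive (j : ℕ) : Involutive (altStep σ τ j) := by
  unfold altStep; split_ifs <;> assumption

lemma altStep_altSeq_succ (j : ℕ) : altStep σ τ j (altSeq σ τ u (j + 1)) = altSeq σ τ u j :=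
  altStep_involutive hσ hτ j _

lemma eq_altSeq_sub_of_altSeq_eq (hpar : a % 2 = b % 2) (hab : a ≤ b)
    (h : altSeq σ τ u a = altSeq σ τ u' b) : u = altSeq σ τ u' (b - a) := by
  induction a generalizing b with
  | zero => simpa [altSeq_zero] using h
  | succ a ih =>
    obtain ⟨b, rfl⟩ : ∃ c, b = c + 1 := ⟨b - 1, by omega⟩
    refine (ih (b := b) (by omega) (by omega) ?_).trans (by congr 1; omega)
    rw [← altStep_altSeq_succ hσ hτ a, ← altStep_altSeq_succ hσ hτ b, h,
      altStep_congr (show a % 2 = b % 2 by omega)]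

lemma altSeq_add_eq_sub (hpar : a % 2 ≠ b % 2) (h : altSeq σ τ u a = altSeq σ τ u' b) :
    ∀ j ≤ b, altSeq σ τ u (a + j) = altSeq σ τ u' (b - j) := by
  intro j hj
  induction j with
  | zero => exact h
  | succ j ih =>
    rw [← add_assoc, altSeq_succ, ih (by omega), altStep_congr (j' := b - (j + 1)) (by omega),
      ← altStep_altSeq_succ hσ hτ (b - (j + 1)), show b - (j + 1) + 1 = b - j by omega]

lemma eq_zero_of_altSeq_eq (hv : τ u' = u') {c : ℕ} (hc : Even c)
    (hmove : ∀ j < c, altSeq σ τ u (j + 1) ≠ altSeq σ τ u j) (h : altSeq σ τ u c = u') :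
    c = 0 := by
  by_contra hc0
  obtain ⟨d, rfl⟩ : ∃ d, c = d + 1 := ⟨c - 1, by omega⟩
  have hd : Odd d := by rwa [Nat.even_add_one, Nat.not_even_iff_odd] at hc
  apply hmove d (by omega)
  rw [← altStep_altSeq_succ hσ hτ d, altStep_of_odd hd, h, hv]

lemma altSeq_injOn (hu : τ u = u) {m : ℕ}
    (hmove : ∀ j < m, altSeq σ τ u (j + 1) ≠ altSeq σ τ u j) :
    Set.InjOn (altSeq σ τ u) (Set.Iic m) := by
  suffices ∀ a b, a < b → b ≤ m → altSeq σ τ u a ≠ altSeq σ τ u b by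
    intro a ha b hb h
    by_contra hne
    rcases Nat.lt_or_gt_of_ne hne with hab | hab
    · exact this a b hab hb h
    · exact this b a hab ha h.symm
  intro a b hab hbm h
  by_cases hpar : a % 2 = b % 2
  -- `u` would recur at the even index `b - a`, but `τ u = u` makes the sequence stop first
  · have h0 := eq_zero_of_altSeq_eq hσ hτ hu (c := b - a) (Nat.even_iff.mpr (by omega))
      (fun j hj => hmove j (by omega))
      (eq_altSeq_sub_of_altSeq_eq hσ hτ hpar hab.le h).symm
    omega
  -- otherwise it would fold back onto itself and be stuck halfway between `a` and `b`
  · have := altSeq_add_eq_sub hσ hτ hpar h ((b - a) / 2) (by omega)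
    exact hmove (a + (b - a) / 2) (by omega) (this.trans (by congr 1; omega)).symm

lemma eq_of_altSeq_eq (hu : τ u = u) (hu' : τ u' = u') (ha : a ≤ altStop σ τ u)
    (hb : b ≤ altStop σ τ u') (hpar : a % 2 = b % 2) (h : altSeq σ τ u a = altSeq σ τ u' b) :
    u = u' := by
  wlog hab : a ≤ b generalizing a b u u'
  · exact (this hu' hu hb ha hpar.symm h.symm (by omega)).symm
  have hu_eq := eq_altSeq_sub_of_altSeq_eq hσ hτ hpar hab h
  have h0 := eq_zero_of_altSeq_eq hσ hτ hu (c := b - a) (Nat.even_iff.mpr (by omega))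
    (fun j hj => altSeq_succ_ne_of_lt_altStop (by omega)) hu_eq.symm
  rwa [h0] at hu_eq

lemma altSeq_altSeq_altStop (hS : Odd (altStop σ τ u)) {j : ℕ} (hj : j ≤ altStop σ τ u) :
    altSeq σ τ (altSeq σ τ u (altStop σ τ u)) j = altSeq σ τ u (altStop σ τ u - j) := by
  simpa using altSeq_add_eq_sub hσ hτ (a := 0) (b := altStop σ τ u) (u := altSeq σ τ u _)
    (by rw [Nat.odd_iff] at hS; omega) rfl j hj

lemma altStop_altSeq_altStop (hu : τ u = u) (hS : Odd (altStop σ τ u)) :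
    altStop σ τ (altSeq σ τ u (altStop σ τ u)) = altStop σ τ u := by
  apply altStop_eq
  · intro j hj
    rw [altSeq_altSeq_altStop hσ hτ hS hj, altSeq_altSeq_altStop hσ hτ hS hj.le]
    have := altSeq_succ_ne_of_lt_altStop (σ := σ) (τ := τ) (u := u)
      (j := altStop σ τ u - (j + 1)) (by omega)
    rw [show altStop σ τ u - (j + 1) + 1 = altStop σ τ u - j by omega] at this
    exact this.symm
  · rw [altSeq_succ, altSeq_altSeq_altStop hσ hτ hS le_rfl, altStep_of_odd hS, Nat.sub_self,
      altSeq_zero, hu]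

lemma altSeq_altStop_altSeq_altStop (hu : τ u = u) (hS : Odd (altStop σ τ u)) :
    altSeq σ τ (altSeq σ τ u (altStop σ τ u)) (altStop σ τ (altSeq σ τ u (altStop σ τ u))) =
      u := by
  rw [altStop_altSeq_altStop hσ hτ hu hS, altSeq_altSeq_altStop hσ hτ hS le_rfl, Nat.sub_self,
    altSeq_zero]

variable [Finite V]

lemma exists_altSeq_succ_eq (hu : τ u = u) : ∃ j, altSeq σ τ u (j + 1) = altSeq σ τ u j := by
  by_contra! h
  exact not_injective_infinite_finite (altSeq σ τ u) fun a b hab =>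
    altSeq_injOn hσ hτ hu (m := max a b) (fun j _ => h j) (le_max_left a b)
      (le_max_right a b) hab

lemma altSeq_altStop_succ (hu : τ u = u) :
    altSeq σ τ u (altStop σ τ u + 1) = altSeq σ τ u (altStop σ τ u) :=
  Nat.sInf_mem (exists_altSeq_succ_eq hσ hτ hu)

lemma altSeq_altStop_eq_of_altSeq_eq (hu : τ u = u) (hu' : τ u' = u') (ha : a ≤ altStop σ τ u)
    (hb : b ≤ altStop σ τ u') (hpar : a % 2 ≠ b % 2) (h : altSeq σ τ u a = altSeq σ τ u' b) :
    altSeq σ τ u (altStop σ τ u) = u' := by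
  set S := altStop σ τ u
  have hchain := altSeq_add_eq_sub hσ hτ hpar h
  have hend : altSeq σ τ u (a + b) = u' := by simpa [altSeq_zero] using hchain b le_rfl
  have hSab : S ≤ a + b := by
    by_contra! hlt
    apply altSeq_succ_ne_of_lt_altStop hlt
    rw [altSeq_succ, altStep_of_odd (Nat.odd_iff.mpr (by omega)), hend, hu']
  obtain ⟨d, hd⟩ : ∃ d, d = b - (S - a) := ⟨_, rfl⟩
  have hS : altSeq σ τ u S = altSeq σ τ u' d := by
    rw [hd, ← hchain (S - a) (by omega)]; congr 1; omega
  rcases Nat.eq_zero_or_pos d with rfl | hdpos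
  · exact hS
  · refine absurd ?_
      (altSeq_succ_ne_of_lt_altStop (σ := σ) (τ := τ) (u := u') (j := d - 1) (by omega))
    have := hchain (S - a + 1) (by omega)
    rw [show a + (S - a + 1) = S + 1 by omega, altSeq_altStop_succ hσ hτ hu, hS] at this
    rw [Nat.sub_add_cancel hdpos, this]
    congr 1; omega

lemma altStop_pos (hu : IsStart σ τ u) : 0 < altStop σ τ u := by
  by_contra! h0
  have := altSeq_altStop_succ hσ hτ hu.2
  rw [Nat.le_zero.mp h0, altSeq_succ, altStep_of_even Even.zero, altSeq_zero] at this
  exact hu.1 this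

lemma altStep_pred_altSeq_altStop_ne (hu : IsStart σ τ u) :
    altStep σ τ (altStop σ τ u - 1) (altSeq σ τ u (altStop σ τ u)) ≠
      altSeq σ τ u (altStop σ τ u) := by
  obtain ⟨d, hd⟩ : ∃ d, altStop σ τ u = d + 1 := ⟨_, (Nat.succ_pred_eq_of_pos
    (altStop_pos hσ hτ hu)).symm⟩
  rw [hd, Nat.add_sub_cancel, altStep_altSeq_succ hσ hτ]
  exact (altSeq_succ_ne_of_lt_altStop (by omega)).symm

lemma isStart_altSeq_altStop_of_odd (hu : IsStart σ τ u) (hS : Odd (altStop σ τ u)) :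
    IsStart σ τ (altSeq σ τ u (altStop σ τ u)) := by
  have hne := altStep_pred_altSeq_altStop_ne hσ hτ hu
  have heq := altSeq_altStop_succ hσ hτ hu.2
  rw [altStep_of_even (Nat.Odd.sub_odd hS odd_one)] at hne
  rw [altSeq_succ, altStep_of_odd hS] at heq
  exact ⟨hne, heq⟩

lemma isStart_altSeq_altStop_of_even (hu : IsStart σ τ u) (hS : Even (altStop σ τ u)) :
    IsStart τ σ (altSeq σ τ u (altStop σ τ u)) := by
  have hne := altStep_pred_altSeq_altStop_ne hσ hτ hu
  have heq := altSeq_altStop_succ hσ hτ hu.2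
  rw [altStep_of_odd (Nat.Even.sub_odd (altStop_pos hσ hτ hu) hS odd_one)] at hne
  rw [altSeq_succ, altStep_of_even hS] at heq
  exact ⟨hne, heq⟩

end Involutive

section Fintype

variable [Fintype V]

lemma card_filter_even_altStop_le (hσ : Involutive σ) (hτ : Involutive τ) :
    (Finset.univ.filter fun u => IsStart σ τ u ∧ Even (altStop σ τ u)).card ≤
      (Finset.univ.filter (IsStart τ σ)).card := by
  refine Finset.card_le_card_of_injOn (fun u => altSeq σ τ u (altStop σ τ u)) ?_ ?_
  · intro u hu
    simp only [Finset.coe_filter, Finset.mem_univ, true_and, Set.mem_ofPred_eq] at hu ⊢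
    exact isStart_altSeq_altStop_of_even hσ hτ hu.1 hu.2
  · intro u hu u' hu' h
    simp only [Finset.coe_filter, Finset.mem_univ, true_and, Set.mem_ofPred_eq] at hu hu'
    exact eq_of_altSeq_eq hσ hτ hu.1.2 hu'.1.2 le_rfl le_rfl
      (by rw [Nat.even_iff.mp hu.2, Nat.even_iff.mp hu'.2]) h

lemma exists_disjoint_altSeq (hσ : Involutive σ) (hτ : Involutive τ) :
    ∃ t ⊆ Finset.univ.filter (fun u => IsStart σ τ u ∧ Odd (altStop σ τ u)),
      (Finset.univ.filter fun u => IsStart σ τ u ∧ Odd (altStop σ τ u)).card = 2 * t.card ∧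
      ∀ u ∈ t, ∀ u' ∈ t, u ≠ u' → ∀ a ≤ altStop σ τ u, ∀ b ≤ altStop σ τ u',
        altSeq σ τ u a ≠ altSeq σ τ u' b := by
  set T := Finset.univ.filter (fun u => IsStart σ τ u ∧ Odd (altStop σ τ u))
  have hT : ∀ u ∈ T, IsStart σ τ u ∧ Odd (altStop σ τ u) := fun u hu => by
    simpa [T] using hu
  obtain ⟨t, htT, hcard, ht⟩ := Finset.exists_half_of_involution
    (s := T) (f := fun u => altSeq σ τ u (altStop σ τ u))
    (fun u hu => by
      obtain ⟨hu, hS⟩ := hT u hu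
      simpa [T, altStop_altSeq_altStop hσ hτ hu.2 hS, hS] using
        isStart_altSeq_altStop_of_odd hσ hτ hu hS)
    (fun u hu => altSeq_altStop_altSeq_altStop hσ hτ (hT u hu).1.2 (hT u hu).2)
    (fun u hu h => by
      obtain ⟨hu, hS⟩ := hT u hu
      have := altSeq_injOn hσ hτ hu.2 (fun j hj => altSeq_succ_ne_of_lt_altStop hj)
        (Set.mem_Iic.mpr le_rfl) (Set.mem_Iic.mpr (Nat.zero_le _)) h
      exact (altStop_pos hσ hτ hu).ne' this)
  refine ⟨t, htT, hcard, fun u hu u' hu' hne a ha b hb h => ?_⟩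
  have hτu := (hT u (htT hu)).1.2
  have hτu' := (hT u' (htT hu')).1.2
  by_cases hpar : a % 2 = b % 2
  · exact hne (eq_of_altSeq_eq hσ hτ hτu hτu' ha hb hpar h)
  · exact ht u hu (altSeq_altStop_eq_of_altSeq_eq hσ hτ hτu hτu' ha hb hpar h ▸ hu')

end Fintype

end AltSeq

open AltSeq

section Matching

variable {V : Type*} {G : SimpleGraph V} {M N : Finset (Sym2 V)} {u v w : V}

-- `v` itself if `M` does not cover `v`, so that `mate M` is an involution of `V`
noncomputable def mate (M : Finset (Sym2 V)) (v : V) : V :=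
  if h : ∃ w, s(v, w) ∈ M then h.choose else v

lemma mk_mate_mem (h : mate M v ≠ v) : s(v, mate M v) ∈ M := by
  unfold mate at h ⊢
  split_ifs at h ⊢ with hv
  · exact hv.choose_spec
  · exact absurd rfl h

lemma IsMatching.mate_eq (hM : IsMatching G M) (h : s(v, w) ∈ M) : mate M v = w := by
  have hv : ∃ w, s(v, w) ∈ M := ⟨w, h⟩
  have hmate : s(v, mate M v) ∈ M := by unfold mate; rw [dif_pos hv]; exact hv.choose_spec
  by_contra hne
  exact hM.2 _ hmate _ h (mt Sym2.congr_right.mp hne) v (Sym2.mem_mk_left _ _)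
    (Sym2.mem_mk_left _ _)

lemma IsMatching.mate_involutive (hM : IsMatching G M) : Function.Involutive (mate M) := by
  intro v
  by_cases h : mate M v = v
  · rw [h, h]
  · exact hM.mate_eq (Sym2.eq_swap ▸ mk_mate_mem h)

lemma IsMatching.mate_eq_self_iff (hM : IsMatching G M) : mate M v = v ↔ ∀ e ∈ M, v ∉ e := by
  refine ⟨fun h e he hv => ?_,
    fun h => by_contra fun hne => h _ (mk_mate_mem hne) (Sym2.mem_mk_left _ _)⟩
  obtain ⟨w, rfl⟩ := Sym2.mem_iff_exists.mp hv
  have hadj := hM.1 _ he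
  rw [SimpleGraph.mem_edgeSet, ← hM.mate_eq he, h] at hadj
  exact hadj.ne rfl

noncomputable def matchedVerts (M : Finset (Sym2 V)) : Finset V :=
  M.biUnion Sym2.toFinset

lemma IsMatching.mem_matchedVerts_iff (hM : IsMatching G M) :
    v ∈ matchedVerts M ↔ mate M v ≠ v := by
  simp [matchedVerts, hM.mate_eq_self_iff]

lemma IsMatching.card_matchedVerts (hM : IsMatching G M) :
    (matchedVerts M).card = 2 * M.card := by
  rw [matchedVerts, Finset.card_biUnion, Finset.sum_const_nat, mul_comm]
  · exact fun e he => Sym2.card_toFinset_of_not_isDiag e (G.not_isDiag_of_mem_edgeSet (hM.1 e he))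
  · exact fun e he f hf hne => Finset.disjoint_left.mpr fun v hve hvf =>
      hM.2 e he f hf hne v (Sym2.mem_toFinset.mp hve) (Sym2.mem_toFinset.mp hvf)

lemma exists_isMatching_card_eq_matchNum [Fintype V] (G : SimpleGraph V) :
    ∃ N, IsMatching G N ∧ N.card = matchNum G := by
  have hempty : IsMatching G ∅ := ⟨by simp, by simp⟩
  refine Nat.sSup_mem (s := {k | ∃ N, IsMatching G N ∧ N.card = k}) ⟨0, ∅, hempty, rfl⟩
    ⟨Fintype.card V, fun k ⟨N, hN, hk⟩ => ?_⟩
  have := hN.card_matchedVerts ▸ (matchedVerts N).card_le_univ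
  omega

end Matching

section AugPaths

variable {V : Type*} {G : SimpleGraph V} {M N : Finset (Sym2 V)} {u : V}

lemma isAugPath_altSeq [Finite V] (hM : IsMatching G M) (hN : IsMatching G N)
    (hu : mate M u = u) {i : ℕ} (hS : altStop (mate N) (mate M) u = 2 * i + 1) :
    IsAugPath G M i (altSeq (mate N) (mate M) u) := by
  have hσ := hN.mate_involutive
  have hτ := hM.mate_involutive
  set x := altSeq (mate N) (mate M) u
  have hmove : ∀ j < 2 * i + 1, x (j + 1) ≠ x j := fun j hj =>
    altSeq_succ_ne_of_lt_altStop (hS ▸ hj)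
  have hinj := altSeq_injOn hσ hτ hu hmove
  refine ⟨fun a b ha hb h => hinj ha hb h, hM.mate_eq_self_iff.mp hu, ?_, fun j hj => ?_,
    fun j hj1 hjk => ?_⟩
  · have hend := altSeq_altStop_succ hσ hτ hu
    rw [hS, altSeq_succ, altStep_of_odd (odd_two_mul_add_one i)] at hend
    exact hM.mate_eq_self_iff.mp hend
  · have hNj : x (2 * j + 1) = mate N (x (2 * j)) :=
      congrFun (altStep_of_even (even_two_mul j)) _
    have hne := hmove (2 * j) (by omega)
    rw [hNj] at hne
    have hmem : s(x (2 * j), x (2 * j + 1)) ∈ N := hNj ▸ mk_mate_mem hne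
    refine ⟨(SimpleGraph.mem_edgeSet G).mp (hN.1 _ hmem), fun hmemM => ?_⟩
    have hM2j := hM.mate_eq hmemM
    rcases j with _ | j
    · exact hmove 0 (by omega) (hM2j.symm.trans hu)
    · have hback := altStep_altSeq_succ hσ hτ (u := u) (2 * j + 1)
      rw [altStep_of_odd (odd_two_mul_add_one j), show 2 * j + 1 + 1 = 2 * (j + 1) by ring,
        hM2j] at hback
      have := hinj (by simp; omega) (by simp; omega) hback
      omega
  · obtain ⟨l, rfl⟩ : ∃ l, j = l + 1 := ⟨j - 1, by omega⟩
    have hMj : x (2 * l + 1 + 1) = mate M (x (2 * l + 1)) :=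
      congrFun (altStep_of_odd (odd_two_mul_add_one l)) _
    have hne := hmove (2 * l + 1) (by omega)
    rw [hMj] at hne
    rw [show 2 * (l + 1) - 1 = 2 * l + 1 by omega, show 2 * (l + 1) = 2 * l + 1 + 1 by ring, hMj]
    exact mk_mate_mem hne

end AugPaths

section DisjointAugPaths

variable {V : Type*} {G : SimpleGraph V} {M : Finset (Sym2 V)} {P Q : Finset (ℕ → V)}
  {len : (ℕ → V) → ℕ}

def IsDisjointAugPaths (G : SimpleGraph V) (M : Finset (Sym2 V)) (P : Finset (ℕ → V))
    (len : (ℕ → V) → ℕ) : Prop :=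
  (∀ p ∈ P, IsAugPath G M (len p) p) ∧
    ∀ p ∈ P, ∀ q ∈ P, p ≠ q → ∀ a ≤ 2 * len p + 1, ∀ b ≤ 2 * len q + 1, p a ≠ q b

lemma IsDisjointAugPaths.mono (hP : IsDisjointAugPaths G M P len) (hQ : Q ⊆ P) :
    IsDisjointAugPaths G M Q len :=
  ⟨fun p hp => hP.1 p (hQ hp), fun p hp q hq => hP.2 p (hQ hp) q (hQ hq)⟩

lemma IsDisjointAugPaths.card_mul_le [Fintype V] (hP : IsDisjointAugPaths G M P len) {L : ℕ}
    (hL : ∀ p ∈ P, L ≤ len p) : P.card * (2 * L + 2) ≤ Fintype.card V := by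
  let verts : (ℕ → V) → Finset V := fun p => (Finset.range (2 * len p + 2)).image p
  have hverts : ∀ p ∈ P, (verts p).card = 2 * len p + 2 := fun p hp => by
    refine (Finset.card_image_of_injOn fun a ha b hb h => ?_).trans (Finset.card_range _)
    simp only [Finset.coe_range, Set.mem_Iio] at ha hb
    exact (hP.1 p hp).1 a b (by omega) (by omega) h
  have hdisj : (P : Set (ℕ → V)).PairwiseDisjoint verts := fun p hp q hq hne =>
    Finset.disjoint_left.mpr fun v hvp hvq => by
      obtain ⟨a, ha, rfl⟩ := Finset.mem_image.mp hvp
      obtain ⟨b, hb, hab⟩ := Finset.mem_image.mp hvq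
      rw [Finset.mem_range] at ha hb
      exact hP.2 p hp q hq hne a (by omega) b (by omega) hab.symm
  calc P.card * (2 * L + 2) ≤ ∑ p ∈ P, (verts p).card := by
        rw [← smul_eq_mul]
        exact Finset.card_nsmul_le_sum P _ _ fun p hp => by
          rw [hverts p hp]; have := hL p hp; omega
    _ = (P.biUnion verts).card := (Finset.card_biUnion hdisj).symm
    _ ≤ Fintype.card V := Finset.card_le_univ _

-- Hopcroft and Karp's lemma, read off `M ∆ N`
theorem exists_isDisjointAugPaths [Fintype V] {N : Finset (Sym2 V)} (hM : IsMatching G M)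
    (hN : IsMatching G N) :
    ∃ P len, IsDisjointAugPaths G M P len ∧ N.card ≤ M.card + P.card := by
  have hσ := hN.mate_involutive
  have hτ := hM.mate_involutive
  obtain ⟨t, htT, hcard, hdisj⟩ := exists_disjoint_altSeq hσ hτ
  have ht : ∀ u ∈ t, mate M u = u ∧ Odd (altStop (mate N) (mate M) u) := fun u hu => by
    have := htT hu; simp only [Finset.mem_filter] at this; exact ⟨this.2.1.2, this.2.2⟩
  set x := altSeq (mate N) (mate M)
  refine ⟨t.image x, fun p => altStop (mate N) (mate M) (p 0) / 2, ⟨?_, ?_⟩, ?_⟩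
  · simp only [Finset.mem_image]
    rintro _ ⟨u, hu, rfl⟩
    exact isAugPath_altSeq hM hN (ht u hu).1 (Nat.two_mul_div_two_add_one_of_odd (ht u hu).2).symm
  · simp only [Finset.mem_image]
    rintro _ ⟨u, hu, rfl⟩ _ ⟨u', hu', rfl⟩ hne a ha b hb
    refine hdisj u hu u' hu' (fun h => hne (h ▸ rfl)) a ?_ b ?_
    · simpa [x, altSeq_zero, Nat.two_mul_div_two_add_one_of_odd (ht u hu).2] using ha
    · simpa [x, altSeq_zero, Nat.two_mul_div_two_add_one_of_odd (ht u' hu').2] using hb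
  · rw [Finset.card_image_of_injective _ fun u u' h => congrFun h 0]
    have hU : matchedVerts N \ matchedVerts M =
        Finset.univ.filter (IsStart (mate N) (mate M)) := by
      ext; simp [IsStart, hM.mem_matchedVerts_iff, hN.mem_matchedVerts_iff]
    have hW : matchedVerts M \ matchedVerts N =
        Finset.univ.filter (IsStart (mate M) (mate N)) := by
      ext; simp [IsStart, hM.mem_matchedVerts_iff, hN.mem_matchedVerts_iff]
    have hNU := Finset.card_sdiff_add_card (matchedVerts N) (matchedVerts M)
    have hMW := Finset.card_sdiff_add_card (matchedVerts M) (matchedVerts N)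
    rw [hU, hM.card_matchedVerts] at hNU
    rw [hW, hN.card_matchedVerts, Finset.union_comm] at hMW
    have hsplit := Finset.card_filter_add_card_filter_not
      (s := Finset.univ.filter (IsStart (mate N) (mate M)))
      (fun u => Odd (altStop (mate N) (mate M) u))
    simp only [Finset.filter_filter, Nat.not_odd_iff_even] at hsplit
    have heven := card_filter_even_altStop_le hσ hτ
    omega

end DisjointAugPaths

lemma short_add_long_le {γ k n short long : ℝ} (hγ0 : 0 < γ) (hγ1 : γ ≤ 1 / 2)
    (hk : 1 / γ ≤ k) (hk' : k < 1 / γ + 1) (hn : 0 ≤ n) (hlong0 : 0 ≤ long)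
    (hshort : short ≤ (k + 1) * (γ ^ 2 * n)) (hlong : long * (2 * (k + 1) + 2) ≤ n) :
    short + long ≤ 3 * γ * n := by
  have hγk : 1 ≤ γ * k := by rwa [div_le_iff₀ hγ0, mul_comm] at hk
  have hγk' : γ * k < 1 + γ := by
    have := mul_lt_mul_of_pos_left hk' hγ0
    rwa [mul_add, mul_one_div_cancel hγ0.ne', mul_one] at this
  -- `(k + 1) γ² < γ + 2 γ² ≤ 2 γ`, and `2 * long ≤ 2 γ k * long ≤ γ n`
  nlinarith [mul_nonneg hγ0.le hn, mul_nonneg hlong0 hγ0.le]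

/-- If for every `i ∈ {0,…,⌈1/γ⌉}` every collection of pairwise vertex-disjoint
augmenting paths of length `2i+1` w.r.t. `M` has size at most `γ²·n`, then
`μ(G) ≤ |M| + 3·γ·n`. -/
theorem stmt_15 {V : Type*} [Fintype V] (G : SimpleGraph V) (n : ℕ)
    (hn : Fintype.card V = n)
    (γ : ℝ) (hγ0 : 0 < γ) (hγ1 : γ ≤ 1/2)
    (M : Finset (Sym2 V)) (hM : IsMatching G M)
    (hpaths : ∀ i ≤ ⌈1/γ⌉₊, ∀ P : Finset (ℕ → V),
      (∀ p ∈ P, IsAugPath G M i p) →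
      (∀ p ∈ P, ∀ q ∈ P, p ≠ q → ∀ a ≤ 2*i+1, ∀ b ≤ 2*i+1, p a ≠ q b) →
      (P.card : ℝ) ≤ γ ^ 2 * n) :
    (matchNum G : ℝ) ≤ (M.card : ℝ) + 3 * γ * n := by
  obtain ⟨N, hN, hNcard⟩ := exists_isMatching_card_eq_matchNum G
  obtain ⟨P, len, hP, hNP⟩ := exists_isDisjointAugPaths hM hN
  set k := ⌈1/γ⌉₊
  set short := fun i => P.filter (len · = i)
  set long := P.filter (k + 1 ≤ len ·)
  have hshort : ∀ i ∈ Finset.range (k + 1), ((short i).card : ℝ) ≤ γ ^ 2 * n := fun i hi => by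
    obtain ⟨hpath, hdisj⟩ := hP.mono (P.filter_subset (len · = i))
    refine hpaths i (Nat.lt_succ_iff.mp (Finset.mem_range.mp hi)) _ (fun p hp => ?_)
      (fun p hp q hq => ?_)
    · simpa [(Finset.mem_filter.mp hp).2] using hpath p hp
    · simpa [(Finset.mem_filter.mp hp).2, (Finset.mem_filter.mp hq).2] using hdisj p hp q hq
  have hlong := (hP.mono (P.filter_subset _)).card_mul_le (L := k + 1) (P := long)
    fun p hp => (Finset.mem_filter.mp hp).2
  have hshort_sum : ∑ i ∈ Finset.range (k + 1), ((short i).card : ℝ) ≤ (k + 1) * (γ ^ 2 * n) :=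
    (Finset.sum_le_sum hshort).trans_eq (by simp)
  have hbound := short_add_long_le hγ0 hγ1 (Nat.le_ceil _) (Nat.ceil_lt_add_one (by positivity))
    (Nat.cast_nonneg n) (Nat.cast_nonneg long.card) hshort_sum (by exact_mod_cast hn ▸ hlong)
  have hsplit := P.card_le_sum_card_filter_eq_add len k
  rw [← hNcard]
  calc (N.card : ℝ) ≤ M.card + (∑ i ∈ Finset.range (k + 1), ((short i).card : ℝ) + long.card) :=
        by exact_mod_cast hNP.trans (Nat.add_le_add_left hsplit _)
    _ ≤ M.card + 3 * γ * n := by linarith
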